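/- Let η be C¹ and strictly increasing on [c,d], ψ and R as in the water wave problem with R ≤ 0 in Ω̄, R = 0 on the surface, ψ_y < 0 on the surface, and the surface identity d/dx[½ψ_y(x,η(x))²] = R_x(x,η(x)) holding. Then min over the surface points {(x,η(x)) : x ∈ [c,d]} of |ψ_y| is attained at x = d (the highest point), i.e. |ψ_y(x,η(x))| is decreasing in x on [c,d]. -/

import Mathlib

open Set

noncomputable def px (f : ℝ × ℝ → ℝ) (p : ℝ × ℝ) : ℝ := deriv (fun t => f (t, p.2)) p.1

noncomputable def py (f : ℝ × ℝ → ℝ) (p : ℝ × ℝ) : ℝ := deriv (fun t => f (p.1, t)) p.2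

noncomputable def Rfun (ψ : ℝ × ℝ → ℝ) (γ : ℝ → ℝ) (g Q : ℝ) : ℝ × ℝ → ℝ :=
  fun p => ((px ψ p) ^ 2 + (py ψ p) ^ 2) / 2 + g * p.2 - Q / 2 + ∫ t in (0:ℝ)..(ψ p), γ t

/-!
Along the surface, `d/dx (½ ψ_y²) = R_x`. At a surface point `(x, η x)` with `x < d`, the
horizontal segment to the right stays below the surface because `η` increases, so there `R ≤ 0`
while `R (x, η x) = 0`: the slice `t ↦ R (t, η x)` has a one-sided maximum at `x`, whence
`R_x ≤ 0`. Thus `ψ_y²` decreases along `[c, d]`, and so does `|ψ_y|`.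
-/

theorem py_eq_fderiv {f : ℝ × ℝ → ℝ} {p : ℝ × ℝ} (hf : DifferentiableAt ℝ f p) :
    py f p = fderiv ℝ f p (0, 1) := by
  have hslice : HasDerivAt (fun t => f (p.1, t)) (fderiv ℝ f p (0, 1)) p.2 :=
    hf.hasFDerivAt.comp_hasDerivAt p.2 ((hasDerivAt_const p.2 p.1).prodMk (hasDerivAt_id p.2))
  exact hslice.deriv

theorem contDiff_py {f : ℝ × ℝ → ℝ} {m n : WithTop ℕ∞} (hf : ContDiff ℝ n f)
    (hmn : m + 1 ≤ n) : ContDiff ℝ m (py f) := by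
  have hdiff : Differentiable ℝ f :=
    hf.differentiable (one_pos.trans_le (le_add_self.trans hmn)).ne'
  rw [show py f = fun p => fderiv ℝ f p (0, 1) from funext fun p => py_eq_fderiv (hdiff p)]
  exact (hf.fderiv_right hmn).clm_apply contDiff_const

theorem deriv_nonpos_of_isLocalMaxOn_Ici {f : ℝ → ℝ} {a : ℝ} (h : IsLocalMaxOn f (Ici a) a) :
    deriv f a ≤ 0 := by
  by_cases hf : DifferentiableAt ℝ f a
  · have hone : (1 : ℝ) ∈ posTangentConeAt (Ici a) a :=
      one_mem_posTangentConeAt_iff_frequently.2 <| Filter.Eventually.frequently <|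
        (eventually_mem_nhdsWithin (s := Ioi a)).mono fun _ hx => Ioi_subset_Ici_self hx
    simpa using h.hasFDerivWithinAt_nonpos hf.hasDerivAt.hasDerivWithinAt.hasFDerivWithinAt hone
  · exact (deriv_zero_of_not_differentiableAt hf).le

theorem px_nonpos_of_le_zero_below_surface {R : ℝ × ℝ → ℝ} {η : ℝ → ℝ} {c d x : ℝ}
    (hmono : MonotoneOn η (Icc c d)) (hx : x ∈ Ico c d) (hηx : 0 ≤ η x)
    (hRle : ∀ p : ℝ × ℝ, 0 ≤ p.2 → p.2 ≤ η p.1 → R p ≤ 0) (hRx : R (x, η x) = 0) :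
    px R (x, η x) ≤ 0 := by
  refine deriv_nonpos_of_isLocalMaxOn_Ici ?_
  filter_upwards [Icc_mem_nhdsGE hx.2] with t ht
  have hηt : η x ≤ η t := hmono ⟨hx.1, hx.2.le⟩ ⟨hx.1.trans ht.1, ht.2⟩ ht.1
  simpa [hRx] using hRle (t, η x) hηx hηt

theorem stmt17_general (ψ : ℝ × ℝ → ℝ) (γ : ℝ → ℝ) (g Q : ℝ) (η : ℝ → ℝ) (c d : ℝ)
    (hη : ContDiff ℝ 1 η) (hψ : ContDiff ℝ 2 ψ)
    (hηpos : ∀ x : ℝ, 0 < η x)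
    (hmono : StrictMonoOn η (Set.Icc c d))
    (hident : ∀ x : ℝ,
      deriv (fun t => (py ψ (t, η t)) ^ 2 / 2) x = px (Rfun ψ γ g Q) (x, η x))
    (hRle : ∀ p : ℝ × ℝ, 0 ≤ p.2 → p.2 ≤ η p.1 → Rfun ψ γ g Q p ≤ 0)
    (hRsurf : ∀ x : ℝ, Rfun ψ γ g Q (x, η x) = 0) :
    AntitoneOn (fun x => |py ψ (x, η x)|) (Set.Icc c d) := by
  have hF : ContDiff ℝ 1 fun x => py ψ (x, η x) ^ 2 / 2 :=
    (((contDiff_py hψ le_rfl).comp (contDiff_id.prodMk hη)).pow 2).div_const 2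
  have hFanti : AntitoneOn (fun x => py ψ (x, η x) ^ 2 / 2) (Icc c d) := by
    refine antitoneOn_of_deriv_nonpos (convex_Icc c d) hF.continuous.continuousOn
      (hF.differentiable one_ne_zero).differentiableOn fun x hx => ?_
    rw [interior_Icc] at hx
    rw [hident x]
    exact px_nonpos_of_le_zero_below_surface hmono.monotoneOn (Ioo_subset_Ico_self hx)
      (hηpos x).le hRle (hRsurf x)
  intro a ha b hb hab
  exact sq_le_sq.1 (by linarith [hFanti ha hb hab])

theorem stmt17 (ψ : ℝ × ℝ → ℝ) (γ : ℝ → ℝ) (g Q : ℝ) (η : ℝ → ℝ) (c d : ℝ)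
    (hcd : c < d)
    (hη : ContDiff ℝ 1 η) (hψ : ContDiff ℝ 2 ψ) (hγ : ContDiff ℝ 1 γ)
    (hηpos : ∀ x : ℝ, 0 < η x)
    (hmono : StrictMonoOn η (Set.Icc c d))
    (hident : ∀ x : ℝ,
      deriv (fun t => (py ψ (t, η t)) ^ 2 / 2) x = px (Rfun ψ γ g Q) (x, η x))
    (hRle : ∀ p : ℝ × ℝ, 0 ≤ p.2 → p.2 ≤ η p.1 → Rfun ψ γ g Q p ≤ 0)
    (hRsurf : ∀ x : ℝ, Rfun ψ γ g Q (x, η x) = 0)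
    (hψy : ∀ x : ℝ, py ψ (x, η x) < 0) :
    AntitoneOn (fun x => |py ψ (x, η x)|) (Set.Icc c d) :=
  stmt17_general ψ γ g Q η c d hη hψ hηpos hmono hident hRle hRsurf
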